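/- Let q ≥ 2, k ≥ 2 and d ≥ k be integers, let I be a maximization instance of k CSP-q with n ≥ d variables and opt(I) ≠ wor(I), and let x ∈ Σ_q^n. Then (max_{y∈B^d(x)} v(I,y) − min_{y∈B^d(x)} v(I,y))/(opt(I) − wor(I)) ≥ δ̄(n,d,k)/(2 − δ̄(n,d,k)). Moreover, if m := ⌊n(q−1)/q⌋ ≥ d, then (max_{y∈B̃^d(x)} v(I,y) − min_{y∈B̃^d(x)} v(I,y))/(opt(I) − wor(I)) ≥ δ̄(m,d,k)/(2 − δ̄(m,d,k)). -/

import Mathlib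

/-- An instance of the (maximization) problem `k CSP-q` with `n` variables:
`m` weighted constraints, where constraint `i` has positive weight `w i`,
arity `arity i ≤ k`, a strictly increasing tuple `idx i` of indices of the
variables it depends on, and a constraint function `P i : Σ_q^{arity i} → ℝ`. -/
structure CSPInstance (q k n : ℕ) where
  m : ℕ
  w : Fin m → ℝ
  w_pos : ∀ i, 0 < w i
  arity : Fin m → ℕ
  arity_le : ∀ i, arity i ≤ k
  idx : (i : Fin m) → Fin (arity i) → Fin n
  idx_mono : ∀ i, StrictMono (idx i)
  P : (i : Fin m) → ((Fin (arity i) → Fin q) → ℝ)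

namespace CSPInstance

variable {q k n : ℕ}

/-- The objective value `v(I, x)` of a solution `x ∈ Σ_q^n`. -/
def value (I : CSPInstance q k n) (x : Fin n → Fin q) : ℝ :=
  ∑ i : Fin I.m, I.w i * I.P i (fun s => x (I.idx i s))

/-- `opt(I)`, the best (maximum) objective value. -/
noncomputable def opt (I : CSPInstance q k n) : ℝ := sSup (Set.range I.value)

/-- `wor(I)`, the worst (minimum) objective value. -/
noncomputable def wor (I : CSPInstance q k n) : ℝ := sInf (Set.range I.value)

/-- `E[v(I,X)]`, the average objective value over all `q^n` solutions. -/
noncomputable def avg (I : CSPInstance q k n) : ℝ :=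
  (∑ x : Fin n → Fin q, I.value x) / (q : ℝ) ^ n

/-- A strong coloring of `I` with `ν` colors: an assignment of colors to variables such
that the support of each constraint meets each color class in at most one index. -/
def StrongColoring (I : CSPInstance q k n) (ν : ℕ) : Prop :=
  ∃ c : Fin n → Fin ν, ∀ i : Fin I.m, Function.Injective (fun s => c (I.idx i s))

end CSPInstance

/-- `(Ψ, Φ)` is an `(n,d)`-cover pair of arrays (CPA) of strength `k`: both arrays have
`R` rows, `n` columns and Boolean entries; `Φ` contains at least one all-ones row; every
row of `Ψ` has at most `d` ones; and for every `k` pairwise distinct columns and every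
`v ∈ {0,1}^k`, `Ψ` and `Φ` have the same number of rows whose restriction to these columns
equals `v`. -/
def IsCPA (n d k R : ℕ) (Ψ Φ : Fin R → Fin n → Bool) : Prop :=
  (∃ r, ∀ j, Φ r j = true) ∧
  (∀ r, (Finset.univ.filter fun j => Ψ r j = true).card ≤ d) ∧
  (∀ c : Fin k → Fin n, StrictMono c → ∀ v : Fin k → Bool,
    (Finset.univ.filter fun r => ∀ s, Ψ r (c s) = v s).card =
      (Finset.univ.filter fun r => ∀ s, Φ r (c s) = v s).card)

/-- `Δ(R, R*, n, d, k)` is nonempty: there is an `(n,d)`-CPA of strength `k` with `R` rows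
in which the all-ones row occurs exactly `R*` times in `Φ`. -/
def DeltaNonempty (R Rstar n d k : ℕ) : Prop :=
  ∃ Ψ Φ : Fin R → Fin n → Bool, IsCPA n d k R Ψ Φ ∧
    (Finset.univ.filter fun r => ∀ j, Φ r j = true).card = Rstar

/-- `δ(n,d,k)`: the supremum of `R*/R` over all integers `R ≥ R* > 0` such that
`Δ(R, R*, n, d, k)` is nonempty. -/
noncomputable def deltaCPA (n d k : ℕ) : ℝ :=
  sSup {x : ℝ | ∃ R Rstar : ℕ, 0 < Rstar ∧ Rstar ≤ R ∧ DeltaNonempty R Rstar n d k ∧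
    x = (Rstar : ℝ) / R}

/-- `Δ̄(R, R*, n, d, k)` is nonempty: there is an `(n,d)`-CPA of strength `k` with `R`
rows in which the all-ones row occurs exactly `R*` times in `Φ`, and in which every row
of both arrays contains either exactly `n` ones or at most `d` ones. -/
def DeltaBarNonempty (R Rstar n d k : ℕ) : Prop :=
  ∃ Ψ Φ : Fin R → Fin n → Bool, IsCPA n d k R Ψ Φ ∧
    (Finset.univ.filter fun r => ∀ j, Φ r j = true).card = Rstar ∧
    (∀ r, (Finset.univ.filter fun j => Ψ r j = true).card = n ∨
      (Finset.univ.filter fun j => Ψ r j = true).card ≤ d) ∧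
    (∀ r, (Finset.univ.filter fun j => Φ r j = true).card = n ∨
      (Finset.univ.filter fun j => Φ r j = true).card ≤ d)

/-- `δ̄(n,d,k)`: the supremum of `R*/R` over all integers `R ≥ R* > 0` such that
`Δ̄(R, R*, n, d, k)` is nonempty. -/
noncomputable def deltaBarCPA (n d k : ℕ) : ℝ :=
  sSup {x : ℝ | ∃ R Rstar : ℕ, 0 < Rstar ∧ Rstar ≤ R ∧ DeltaBarNonempty R Rstar n d k ∧
    x = (Rstar : ℝ) / R}

/-!
Let `(Ψ, Φ)` be a CPA with `N` columns and `t` a solution with `d_H(b, t) ≤ N`. Map the columns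
injectively onto a set of variables containing every variable where `b` and `t` differ, and let
each row choose `t` on the variables of its 1-columns and `b` elsewhere. Every constraint reads at
most `k` columns, so the strength-`k` balance of the CPA makes the total objective over the rows
of `Ψ` equal to that over the rows of `Φ`. The rows of `Ψ` and the rows of `Φ` that are not all
ones give solutions in `B^d(b)`, while the `R*` all-ones rows give `t`. Doing this with `t` optimal
and with `t` worst gives `R* (opt - wor) ≤ (2R - R*) D`, where `D` is the diameter of the objective
on the ball, i.e. `ρ (opt - wor + D) ≤ 2 D` for `ρ = R*/R`, and the bound follows on passing to the
supremum. For the shifted balls, averaging over the shifts `a` gives one with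
`d_H(x + a·𝟏, t) ≤ ⌊n(q-1)/q⌋`.
-/

open Finset

namespace IsCPA

variable {n d k R : ℕ} {Ψ Φ : Fin R → Fin n → Bool}

theorem sum_comp_eq {M : Type*} [AddCommMonoid M] (h : IsCPA n d k R Ψ Φ)
    {c : Fin k → Fin n} (hc : StrictMono c) (F : (Fin k → Bool) → M) :
    ∑ r, F (Ψ r ∘ c) = ∑ r, F (Φ r ∘ c) := by
  have hfiber : ∀ (A : Fin R → Fin n → Bool) (v : Fin k → Bool),
      ∑ r with A r ∘ c = v, F (A r ∘ c) = #{r | ∀ s, A r (c s) = v s} • F v := fun A v => by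
    rw [sum_congr rfl fun r hr => congrArg F (mem_filter.1 hr).2, sum_const]
    simp only [funext_iff, Function.comp_apply]
  rw [← sum_fiberwise univ (fun r => Ψ r ∘ c), ← sum_fiberwise univ (fun r => Φ r ∘ c)]
  simp only [hfiber, h.2.2 c hc]

theorem sum_eq_of_dependsOn {M : Type*} [AddCommMonoid M] (h : IsCPA n d k R Ψ Φ) (hkn : k ≤ n)
    {T : Finset (Fin n)} (hT : #T ≤ k) {G : (Fin n → Bool) → M} (hG : DependsOn G T) :
    ∑ r, G (Ψ r) = ∑ r, G (Φ r) := by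
  obtain ⟨T', hTT', hT'⟩ := exists_superset_card_eq hT (by simpa using hkn)
  set c := T'.orderEmbOfFin hT'
  have hGc : ∀ row, G row = G (Function.extend c (row ∘ c) fun _ => false) := fun row =>
    hG fun j hj => by
      obtain ⟨s, rfl⟩ : j ∈ Set.range c := by simpa [c] using hTT' hj
      simp [c.injective.extend_apply]
  rw [Fintype.sum_congr _ _ fun r => hGc (Ψ r), Fintype.sum_congr _ _ fun r => hGc (Φ r)]
  exact h.sum_comp_eq c.strictMono fun v => G (Function.extend c v fun _ => false)

end IsCPA

section RowSolution

variable {α : Type*} {n N : ℕ}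

def rowSolution (b t : Fin n → α) (τ : Fin N ↪ Fin n) (row : Fin N → Bool) : Fin n → α :=
  ({c | row c = true} : Finset (Fin N)).map τ |>.piecewise t b

theorem hammingDist_rowSolution_le [DecidableEq α] (b t : Fin n → α) (τ : Fin N ↪ Fin n)
    (row : Fin N → Bool) : hammingDist b (rowSolution b t τ row) ≤ #{c | row c = true} := by
  refine (card_le_card fun j hj => ?_).trans (card_map τ).le
  by_contra hj'
  rw [mem_filter, rowSolution, piecewise_eq_of_notMem _ _ _ hj'] at hj
  exact hj.2 rfl

theorem rowSolution_of_forall_eq_true {b t : Fin n → α} {τ : Fin N ↪ Fin n}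
    (hbt : ∀ j ∉ Set.range τ, b j = t j) {row : Fin N → Bool} (hrow : ∀ c, row c = true) :
    rowSolution b t τ row = t := by
  funext j
  by_cases hj : j ∈ Set.range τ
  · obtain ⟨c, rfl⟩ := hj
    simp [rowSolution, hrow]
  · simp only [rowSolution, piecewise, mem_map, mem_filter, mem_univ, true_and]
    split_ifs
    · rfl
    · exact hbt j hj

theorem DependsOn.rowSolution {β : Type*} {F : (Fin n → α) → β} {U : Set (Fin n)}
    (hF : DependsOn F U) (b t : Fin n → α) (τ : Fin N ↪ Fin n) :
    DependsOn (fun row => F (rowSolution b t τ row)) (τ ⁻¹' U) := fun r r' h =>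
  hF fun j hj => by
    have hmem : j ∈ map τ {c | r c = true} ↔ j ∈ map τ {c | r' c = true} := by
      simp only [mem_map, mem_filter, mem_univ, true_and]
      exact exists_congr fun c => and_congr_left fun hc => by
        rw [h c (show τ c ∈ U by rwa [hc])]
    simp only [_root_.rowSolution, piecewise, hmem]

end RowSolution

theorem exists_embedding_of_hammingDist_le {α : Type*} [DecidableEq α] {n N : ℕ}
    {b t : Fin n → α} (hbt : hammingDist b t ≤ N) (hNn : N ≤ n) :
    ∃ τ : Fin N ↪ Fin n, ∀ j ∉ Set.range τ, b j = t j := by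
  obtain ⟨S, hS, hSN⟩ := exists_superset_card_eq hbt (by simpa using hNn)
  refine ⟨(S.orderEmbOfFin hSN).toEmbedding, fun j hj => ?_⟩
  by_contra hne
  exact hj (by simpa using hS (by simpa [hammingDist] using hne))

theorem exists_add_hammingDist_le {ι G : Type*} [Fintype ι] [AddGroup G] [Fintype G]
    [DecidableEq G] (x t : ι → G) :
    ∃ a : G, Fintype.card G * hammingDist (fun j => x j + a) t ≤
      Fintype.card ι * (Fintype.card G - 1) := by
  have hsum :
      ∑ a : G, hammingDist (fun j => x j + a) t = Fintype.card ι * (Fintype.card G - 1) := by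
    have hshift : ∀ j, #{a : G | x j + a ≠ t j} = Fintype.card G - 1 := fun j => by
      simp [← eq_neg_add_iff_add_eq, filter_ne', card_erase_of_mem]
    simp only [hammingDist, card_filter]
    rw [sum_comm]
    simp only [← card_filter, hshift, sum_const, card_univ, smul_eq_mul]
  obtain ⟨a, -, ha⟩ := exists_le_of_sum_le univ_nonempty (f := fun a =>
    Fintype.card G * hammingDist (fun j => x j + a) t)
    (g := fun _ => Fintype.card ι * (Fintype.card G - 1)) (by simp [← mul_sum, hsum])
  exact ⟨a, ha⟩

theorem card_mul_add_le_of_sum_eq {ι : Type*} [Fintype ι] [DecidableEq ι] {u w : ι → ℝ}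
    (hsum : ∑ i, u i = ∑ i, w i) (A : Finset ι) {z μ M : ℝ} (hu : ∀ i, u i ≤ M)
    (hA : ∀ i ∈ A, w i = z) (hAc : ∀ i ∉ A, μ ≤ w i) :
    #A * z + (Fintype.card ι - #A) * μ ≤ Fintype.card ι * M := by
  calc #A * z + (Fintype.card ι - #A) * μ = ∑ i ∈ A, z + ∑ i ∈ Aᶜ, μ := by
        simp [card_compl, Nat.cast_sub (card_le_univ A)]
    _ ≤ ∑ i ∈ A, w i + ∑ i ∈ Aᶜ, w i := by
        gcongr with i hi i hi
        · exact (hA i hi).ge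
        · exact hAc i (by simpa using hi)
    _ = ∑ i, u i := by rw [sum_add_sum_compl, hsum]
    _ ≤ ∑ _i, M := sum_le_sum fun i _ => hu i
    _ = Fintype.card ι * M := by rw [sum_const, card_univ, nsmul_eq_mul]

namespace CSPInstance

variable {q k n : ℕ}

theorem dependsOn_constraint (I : CSPInstance q k n) (i : Fin I.m) :
    DependsOn (fun y : Fin n → Fin q => I.w i * I.P i fun s => y (I.idx i s))
      (Set.range (I.idx i)) := fun y y' h => by
  simp only [funext fun s => h _ ⟨s, rfl⟩]

theorem sum_value_rowSolution_eq (I : CSPInstance q k n) {N d R : ℕ}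
    {Ψ Φ : Fin R → Fin N → Bool} (h : IsCPA N d k R Ψ Φ) (hkN : k ≤ N)
    (b t : Fin n → Fin q) (τ : Fin N ↪ Fin n) :
    ∑ r, I.value (rowSolution b t τ (Ψ r)) = ∑ r, I.value (rowSolution b t τ (Φ r)) := by
  simp only [value]
  rw [sum_comm, sum_comm (γ := Fin R)]
  refine sum_congr rfl fun i _ => ?_
  let T := (univ.image (I.idx i)).preimage τ τ.injective.injOn
  have hT : #T ≤ k := calc
    #T ≤ #(univ.image (I.idx i)) := by rw [card_preimage]; exact card_filter_le _ _
    _ ≤ I.arity i := card_image_le.trans (card_fin _).le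
    _ ≤ k := I.arity_le i
  exact h.sum_eq_of_dependsOn hkN hT <|
    ((I.dependsOn_constraint i).rowSolution b t τ).mono fun c hc => by simpa [T] using hc

end CSPInstance

theorem DeltaBarNonempty.value_bounds {q k n N d R Rstar : ℕ}
    (h : DeltaBarNonempty R Rstar N d k) (hkN : k ≤ N) (I : CSPInstance q k n)
    {b t : Fin n → Fin q} (hbt : hammingDist b t ≤ N) (hNn : N ≤ n) {μ M : ℝ}
    (hM : ∀ y, hammingDist b y ≤ d → I.value y ≤ M)
    (hμ : ∀ y, hammingDist b y ≤ d → μ ≤ I.value y) :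
    Rstar * I.value t + (R - Rstar) * μ ≤ R * M ∧
      R * μ ≤ Rstar * I.value t + (R - Rstar) * M := by
  obtain ⟨Ψ, Φ, hCPA, rfl, -, hΦ⟩ := h
  obtain ⟨τ, hτ⟩ := exists_embedding_of_hammingDist_le hbt hNn
  set A : Finset (Fin R) := {r | ∀ j, Φ r j = true}
  have hsum := I.sum_value_rowSolution_eq hCPA hkN b t τ
  have hΨ (r) : hammingDist b (rowSolution b t τ (Ψ r)) ≤ d :=
    (hammingDist_rowSolution_le b t τ _).trans (hCPA.2.1 r)
  have hΦA : ∀ r ∈ A, I.value (rowSolution b t τ (Φ r)) = I.value t := fun r hr => by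
    rw [rowSolution_of_forall_eq_true hτ (mem_filter.1 hr).2]
  have hΦAc : ∀ r ∉ A, hammingDist b (rowSolution b t τ (Φ r)) ≤ d := fun r hr =>
    (hammingDist_rowSolution_le b t τ _).trans <| (hΦ r).resolve_left fun hfull =>
      hr <| mem_filter.2 ⟨mem_univ r, fun j =>
        card_filter_eq_iff.1 (by simpa using hfull) j (mem_univ j)⟩
  constructor
  · simpa using card_mul_add_le_of_sum_eq hsum A (fun r => hM _ (hΨ r)) hΦA
      fun r hr => hμ _ (hΦAc r hr)
  · have := card_mul_add_le_of_sum_eq (u := fun r => -I.value (rowSolution b t τ (Ψ r)))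
      (w := fun r => -I.value (rowSolution b t τ (Φ r))) (by simp [hsum]) A
      (fun r => neg_le_neg (hμ _ (hΨ r))) (fun r hr => by rw [hΦA r hr])
      fun r hr => neg_le_neg (hM _ (hΦAc r hr))
    simp only [Fintype.card_fin] at this
    linarith

theorem sSup_div_two_sub_le_div {S : Set ℝ} {G D : ℝ} (hG : 0 < G) (hD : 0 ≤ D)
    (hS : ∀ ρ ∈ S, ρ * (G + D) ≤ 2 * D) : sSup S / (2 - sSup S) ≤ D / G := by
  have hGD : 0 < G + D := by linarith
  have hsup : sSup S * (G + D) ≤ 2 * D :=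
    (le_div_iff₀ hGD).1 <| Real.sSup_le (fun ρ hρ => (le_div_iff₀ hGD).2 (hS ρ hρ)) (by positivity)
  have hlt : sSup S < 2 := by nlinarith
  rw [div_le_div_iff₀ (by linarith) hG]
  nlinarith

namespace CSPInstance

variable {q k n : ℕ}

theorem exists_value_eq_opt [Nonempty (Fin n → Fin q)] (I : CSPInstance q k n) :
    ∃ y, I.value y = I.opt :=
  (Set.range_nonempty _).csSup_mem (Set.finite_range _)

theorem exists_value_eq_wor [Nonempty (Fin n → Fin q)] (I : CSPInstance q k n) :
    ∃ y, I.value y = I.wor :=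
  (Set.range_nonempty _).csInf_mem (Set.finite_range _)

theorem wor_le_value (I : CSPInstance q k n) (y : Fin n → Fin q) : I.wor ≤ I.value y :=
  csInf_le (Set.finite_range _).bddBelow (Set.mem_range_self y)

theorem deltaBarCPA_div_le_of_cover [Nonempty (Fin n → Fin q)] (I : CSPInstance q k n)
    (hne : I.opt ≠ I.wor) {N d : ℕ} (hkN : k ≤ N) (hNn : N ≤ n) (B : Set (Fin n → Fin q))
    (hB : ∀ t, ∃ b, hammingDist b t ≤ N ∧ ∀ y, hammingDist b y ≤ d → y ∈ B) :
    deltaBarCPA N d k / (2 - deltaBarCPA N d k) ≤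
      (sSup (I.value '' B) - sInf (I.value '' B)) / (I.opt - I.wor) := by
  have hfin : (I.value '' B).Finite := Set.toFinite _
  have hM {y} (hy : y ∈ B) : I.value y ≤ sSup (I.value '' B) :=
    le_csSup hfin.bddAbove (Set.mem_image_of_mem _ hy)
  have hμ {y} (hy : y ∈ B) : sInf (I.value '' B) ≤ I.value y :=
    csInf_le hfin.bddBelow (Set.mem_image_of_mem _ hy)
  obtain ⟨yopt, hyopt⟩ := I.exists_value_eq_opt
  obtain ⟨ywor, hywor⟩ := I.exists_value_eq_wor
  have hG : 0 < I.opt - I.wor :=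
    sub_pos.2 <| (hyopt ▸ I.wor_le_value yopt).lt_of_ne' hne
  obtain ⟨b₁, hb₁, hb₁B⟩ := hB yopt
  obtain ⟨b₂, hb₂, hb₂B⟩ := hB ywor
  have hD : 0 ≤ sSup (I.value '' B) - sInf (I.value '' B) := by
    have hb₁B' := hb₁B b₁ (by simp)
    linarith [hM hb₁B', hμ hb₁B']
  refine sSup_div_two_sub_le_div hG hD ?_
  rintro _ ⟨R, Rstar, hRstar, hRstarR, hΔ, rfl⟩
  have h₁ := (hΔ.value_bounds hkN I hb₁ hNn (fun y hy => hM (hb₁B y hy))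
    fun y hy => hμ (hb₁B y hy)).1
  have h₂ := (hΔ.value_bounds hkN I hb₂ hNn (fun y hy => hM (hb₂B y hy))
    fun y hy => hμ (hb₂B y hy)).2
  rw [hyopt] at h₁
  rw [hywor] at h₂
  have hR : (0 : ℝ) < R := by exact_mod_cast hRstar.trans_le hRstarR
  rw [div_mul_eq_mul_div, div_le_iff₀ hR]
  linarith

end CSPInstance

theorem hamming_ball_diameter_apx_general
    (q k d n : ℕ) (hq : 2 ≤ q) (hdk : k ≤ d) (hnd : d ≤ n)
    (I : CSPInstance q k n) (hne : I.opt ≠ I.wor) (x : Fin n → Fin q) :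
    (deltaBarCPA n d k / (2 - deltaBarCPA n d k) ≤
      (sSup {v : ℝ | ∃ y : Fin n → Fin q, hammingDist x y ≤ d ∧ v = I.value y} -
        sInf {v : ℝ | ∃ y : Fin n → Fin q, hammingDist x y ≤ d ∧ v = I.value y}) /
        (I.opt - I.wor)) ∧
    (d ≤ n * (q - 1) / q →
      deltaBarCPA (n * (q - 1) / q) d k / (2 - deltaBarCPA (n * (q - 1) / q) d k) ≤
        (sSup {v : ℝ | ∃ y : Fin n → Fin q,
            (∃ a : Fin q, hammingDist (fun j => x j + a) y ≤ d) ∧ v = I.value y} -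
          sInf {v : ℝ | ∃ y : Fin n → Fin q,
            (∃ a : Fin q, hammingDist (fun j => x j + a) y ≤ d) ∧ v = I.value y}) /
          (I.opt - I.wor)) := by
  have : NeZero q := ⟨by omega⟩
  have : Nonempty (Fin n → Fin q) := ⟨x⟩
  have himage (p : (Fin n → Fin q) → Prop) :
      {v : ℝ | ∃ y, p y ∧ v = I.value y} = I.value '' {y | p y} := by
    ext; simp [eq_comm]
  simp only [himage]
  refine ⟨I.deltaBarCPA_div_le_of_cover hne (hdk.trans hnd) le_rfl _ fun _ =>
    ⟨x, hammingDist_le_card_fintype.trans (Fintype.card_fin n).le, fun _ => id⟩, fun hdm => ?_⟩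
  refine I.deltaBarCPA_div_le_of_cover hne (hdk.trans hdm) (Nat.div_le_of_le_mul ?_) _ fun t => ?_
  · rw [mul_comm q]
    exact Nat.mul_le_mul_left n (Nat.sub_le q 1)
  obtain ⟨a, ha⟩ := exists_add_hammingDist_le x t
  refine ⟨fun j => x j + a, (Nat.le_div_iff_mul_le (by omega)).2 ?_, fun y hy => ⟨a, hy⟩⟩
  simpa [mul_comm] using ha

/-- Let `q ≥ 2`, `k ≥ 2`, `d ≥ k`, let `I` be a maximization instance
of `k CSP-q` with `n ≥ d` variables and `opt(I) ≠ wor(I)`, and let `x ∈ Σ_q^n`. Then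
`(max_{y∈B^d(x)} v(I,y) − min_{y∈B^d(x)} v(I,y)) / (opt(I) − wor(I)) ≥ δ̄(n,d,k)/(2 − δ̄(n,d,k))`;
moreover, if `m := ⌊n(q−1)/q⌋ ≥ d`, then the analogous bound with `δ̄(m,d,k)` holds over
`B̃^d(x) = ∪_{a∈Σ_q} B^d(x + a·𝟏)`. -/
theorem hamming_ball_diameter_apx
    (q k d n : ℕ) (hq : 2 ≤ q) (hk : 2 ≤ k) (hdk : k ≤ d) (hnd : d ≤ n)
    (I : CSPInstance q k n) (hne : I.opt ≠ I.wor) (x : Fin n → Fin q) :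
    (deltaBarCPA n d k / (2 - deltaBarCPA n d k) ≤
      (sSup {v : ℝ | ∃ y : Fin n → Fin q, hammingDist x y ≤ d ∧ v = I.value y} -
        sInf {v : ℝ | ∃ y : Fin n → Fin q, hammingDist x y ≤ d ∧ v = I.value y}) /
        (I.opt - I.wor)) ∧
    (d ≤ n * (q - 1) / q →
      deltaBarCPA (n * (q - 1) / q) d k / (2 - deltaBarCPA (n * (q - 1) / q) d k) ≤
        (sSup {v : ℝ | ∃ y : Fin n → Fin q,
            (∃ a : Fin q, hammingDist (fun j => x j + a) y ≤ d) ∧ v = I.value y} -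
          sInf {v : ℝ | ∃ y : Fin n → Fin q,
            (∃ a : Fin q, hammingDist (fun j => x j + a) y ≤ d) ∧ v = I.value y}) /
          (I.opt - I.wor)) :=
  hamming_ball_diameter_apx_general q k d n hq hdk hnd I hne x
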